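/- For every ε ∈ (0, 2/9], the vector λ = (ε/2, ε/2, 1/4 − ε/8, 1/4 − ε/8, 1/2 − 3ε/4) satisfies NCOND for the 5-cycle with edges {1,2},{1,3},{2,4},{3,5},{4,5}, yet λ₅ ≥ a·α̃, where a = λ₃(λ₁+λ₄)/(λ₁+λ₄−λ₂) + λ₄(λ₂+λ₃)/(λ₂+λ₃−λ₁) and α̃ = [1 + λ₁/(λ₂+λ₃−λ₁) + λ₂/(λ₁+λ₄−λ₂)]⁻¹. More precisely, λ₅ − aα̃ = (ε/8)(1 − 9ε/2)/(1/4 + 7ε/8) ≥ 0. -/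

import Mathlib

open Finset

open Classical in
/-- Neighborhood of a finite set `A` of vertices. -/
noncomputable def nbrSet {V : Type*} [Fintype V] (G : SimpleGraph V) (A : Finset V) : Finset V :=
  Finset.univ.filter (fun j => ∃ i ∈ A, G.Adj i j)

/-- An independent set: a nonempty set of pairwise non-adjacent vertices. -/
def IsIndepSet {V : Type*} (G : SimpleGraph V) (I : Finset V) : Prop :=
  I.Nonempty ∧ ∀ i ∈ I, ∀ j ∈ I, ¬ G.Adj i j

/-- NCOND. -/
def NCond {V : Type*} [Fintype V] (G : SimpleGraph V) (lam : V → ℝ) : Prop :=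
  ∀ I : Finset V, IsIndepSet G I → ∑ i ∈ I, lam i < ∑ j ∈ nbrSet G I, lam j

/-- The 5-cycle on vertices `0,…,4` (paper labels `1,…,5`), with edges
`{0,1}, {0,2}, {1,3}, {2,4}, {3,4}`. -/
def fiveCycle : SimpleGraph (Fin 5) :=
  SimpleGraph.fromRel (fun a b =>
    (a = 0 ∧ b = 1) ∨ (a = 0 ∧ b = 2) ∨ (a = 1 ∧ b = 3) ∨ (a = 2 ∧ b = 4) ∨ (a = 3 ∧ b = 4))

/-!
With `λ₀ = λ₁ = ε/2` and `λ₂ = λ₃ = d := 1/4 - ε/8`, both denominators `λ₀ + λ₃ - λ₁` and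
`λ₁ + λ₂ - λ₀` equal `d`, so `a = ε + 2d` and `α̃ = d / (d + ε)`, and the gap `λ₄ - a α̃` is an
explicit rational function of `ε`. NCOND is a finite check: the 5-cycle has exactly ten
independent sets, and for each of them the inequality is linear in `ε`.
-/

instance : DecidableRel fiveCycle.Adj := fun _ _ =>
  decidable_of_iff' _ (SimpleGraph.fromRel_adj _ _ _)

theorem nbrSet_eq_filter {V : Type*} [Fintype V] (G : SimpleGraph V) [DecidableRel G.Adj]
    (A : Finset V) :
    nbrSet G A = univ.filter (fun j => ∃ i ∈ A, G.Adj i j) := by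
  unfold nbrSet
  congr!

theorem isIndepSet_fiveCycle_iff (I : Finset (Fin 5)) :
    IsIndepSet fiveCycle I ↔
      I ∈ ({{0}, {1}, {2}, {3}, {4}, {0, 3}, {0, 4}, {1, 2}, {1, 4}, {2, 3}} :
        Finset (Finset (Fin 5))) := by
  unfold IsIndepSet
  revert I
  decide

theorem nbrSet_fiveCycle :
    nbrSet fiveCycle {0} = {1, 2} ∧ nbrSet fiveCycle {1} = {0, 3} ∧
    nbrSet fiveCycle {2} = {0, 4} ∧ nbrSet fiveCycle {3} = {1, 4} ∧
    nbrSet fiveCycle {4} = {2, 3} ∧ nbrSet fiveCycle {0, 3} = {1, 2, 4} ∧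
    nbrSet fiveCycle {0, 4} = {1, 2, 3} ∧ nbrSet fiveCycle {1, 2} = {0, 3, 4} ∧
    nbrSet fiveCycle {1, 4} = {0, 2, 3} ∧ nbrSet fiveCycle {2, 3} = {0, 1, 4} := by
  simp only [nbrSet_eq_filter]
  decide

theorem ncond_fiveCycle_iff (lam : Fin 5 → ℝ) :
    NCond fiveCycle lam ↔
      lam 0 < lam 1 + lam 2 ∧ lam 1 < lam 0 + lam 3 ∧ lam 2 < lam 0 + lam 4 ∧
      lam 3 < lam 1 + lam 4 ∧ lam 4 < lam 2 + lam 3 ∧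
      lam 0 + lam 3 < lam 1 + (lam 2 + lam 4) ∧ lam 0 + lam 4 < lam 1 + (lam 2 + lam 3) ∧
      lam 1 + lam 2 < lam 0 + (lam 3 + lam 4) ∧ lam 1 + lam 4 < lam 0 + (lam 2 + lam 3) ∧
      lam 2 + lam 3 < lam 0 + (lam 1 + lam 4) := by
  obtain ⟨h0, h1, h2, h3, h4, h03, h04, h12, h14, h23⟩ := nbrSet_fiveCycle
  simp only [NCond, isIndepSet_fiveCycle_iff, forall_mem_insert, mem_singleton, forall_eq,
    h0, h1, h2, h3, h4, h03, h04, h12, h14, h23]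
  simp

/-- for every `ε ∈ (0, 2/9]`, the vector
`λ = (ε/2, ε/2, 1/4 − ε/8, 1/4 − ε/8, 1/2 − 3ε/4)` satisfies NCOND for the 5-cycle,
yet `λ₅ − a·α̃ = (ε/8)(1 − 9ε/2)/(1/4 + 7ε/8) ≥ 0`. -/
theorem fiveCycle_ncond_not_sufficient (ε : ℝ) (hε0 : 0 < ε) (hε : ε ≤ 2 / 9)
    (lam : Fin 5 → ℝ)
    (hlam : lam = ![ε / 2, ε / 2, 1 / 4 - ε / 8, 1 / 4 - ε / 8, 1 / 2 - 3 * ε / 4])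
    (a αt : ℝ)
    (ha : a = lam 2 * (lam 0 + lam 3) / (lam 0 + lam 3 - lam 1)
        + lam 3 * (lam 1 + lam 2) / (lam 1 + lam 2 - lam 0))
    (hαt : αt = (1 + lam 0 / (lam 1 + lam 2 - lam 0) + lam 1 / (lam 0 + lam 3 - lam 1))⁻¹) :
    NCond fiveCycle lam ∧
    lam 4 - a * αt = (ε / 8) * (1 - 9 * ε / 2) / (1 / 4 + 7 * ε / 8) ∧
    0 ≤ lam 4 - a * αt := by
  obtain ⟨h0, h1, h2, h3, h4⟩ : lam 0 = ε / 2 ∧ lam 1 = ε / 2 ∧ lam 2 = 1 / 4 - ε / 8 ∧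
      lam 3 = 1 / 4 - ε / 8 ∧ lam 4 = 1 / 2 - 3 * ε / 4 := by
    subst hlam
    exact ⟨rfl, rfl, rfl, rfl, rfl⟩
  have hncond : NCond fiveCycle lam := by
    rw [ncond_fiveCycle_iff, h0, h1, h2, h3, h4]
    refine ⟨?_, ?_, ?_, ?_, ?_, ?_, ?_, ?_, ?_, ?_⟩ <;> linarith
  set d : ℝ := 1 / 4 - ε / 8 with hd
  have hd0 : 0 < d := by linarith
  have ha' : a = ε + 2 * d := by
    rw [ha, h0, h1, h2, h3, add_sub_cancel_left]
    field_simp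
    ring
  have hαt' : αt = d / (d + ε) := by
    rw [hαt, h0, h1, h2, h3, add_sub_cancel_left]
    field_simp
    ring
  have hgap : lam 4 - a * αt = ε / 8 * (1 - 9 * ε / 2) / (1 / 4 + 7 * ε / 8) := by
    have hs : d + ε ≠ 0 := by positivity
    rw [h4, ha', hαt', show 1 / 4 + 7 * ε / 8 = d + ε by rw [hd]; ring]
    field_simp
    rw [hd]
    ring
  refine ⟨hncond, hgap, hgap ▸ div_nonneg (mul_nonneg ?_ ?_) ?_⟩ <;> linarith
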